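/- arXiv:1404.4453 — 2 statements merged into one kernel-verified Lean document; each statement's English description precedes it below -/
import Mathlib

section
/- With α_opt = ρ hᵀa / (1 + ρ‖h‖²), the minimum value of α² + ρ‖αh − a‖² over α ∈ ℝ equals ρ · aᵀ G a, where G = I_N − (ρ/(1+ρ‖h‖²)) h hᵀ. Consequently the computation rate (1/2)log⁺(ρ/(α² + ρ‖αh − a‖²)) is maximized over α precisely by maximizing 1/(aᵀGa). -/
/-! Completing the square in `α`: `f α = (1 + ρ‖h‖²)(α - α_opt)² + ρ aᵀGa`. -/

open Matrix

section

variable {n R : Type*} [Fintype n] [CommRing R]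

theorem sum_sq_mul_sub (α : R) (h a : n → R) :
    ∑ i, (α * h i - a i) ^ 2 = α ^ 2 * (h ⬝ᵥ h) - 2 * α * (h ⬝ᵥ a) + a ⬝ᵥ a := by
  simp only [dotProduct, Finset.mul_sum, ← Finset.sum_sub_distrib, ← Finset.sum_add_distrib]
  exact Finset.sum_congr rfl fun i _ => by ring

theorem dotProduct_one_sub_smul_vecMulVec_mulVec [DecidableEq n] (c : R) (h a : n → R) :
    a ⬝ᵥ ((1 - c • vecMulVec h h) *ᵥ a) = a ⬝ᵥ a - c * (h ⬝ᵥ a) ^ 2 := by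
  rw [sub_mulVec, one_mulVec, smul_mulVec, vecMulVec_mulVec, dotProduct_sub, dotProduct_smul,
    op_smul_eq_smul, dotProduct_smul, dotProduct_comm a h, smul_eq_mul, smul_eq_mul]
  ring

end

theorem quadratic_eq_mul_sq_sub_add {K : Type*} [Field K] {D : K} (hD : D ≠ 0) (x b c : K) :
    D * x ^ 2 - 2 * b * x + c = D * (x - b / D) ^ 2 + (c - b ^ 2 / D) := by
  field_simp
  ring

/-- With `α_opt = ρ hᵀa/(1+ρ‖h‖²)`, the minimum of `α² + ρ‖αh − a‖²` equals `ρ aᵀGa`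
with `G = I − (ρ/(1+ρ‖h‖²)) h hᵀ`; hence `ρ aᵀGa ≤ α² + ρ‖αh − a‖²` for every `α`. -/
theorem min_value_is_rho_aGa (N : ℕ) (h : Fin N → ℝ) (a : Fin N → ℝ) (ρ : ℝ) (hρ : 0 < ρ) :
    let f : ℝ → ℝ := fun α => α ^ 2 + ρ * ∑ i, (α * h i - a i) ^ 2
    let αopt : ℝ := ρ * (∑ i, h i * a i) / (1 + ρ * ∑ i, h i ^ 2)
    let G : Matrix (Fin N) (Fin N) ℝ :=
      (1 : Matrix (Fin N) (Fin N) ℝ) - (ρ / (1 + ρ * ∑ i, h i ^ 2)) • Matrix.vecMulVec h h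
    f αopt = ρ * (a ⬝ᵥ G.mulVec a) ∧ ∀ α : ℝ, ρ * (a ⬝ᵥ G.mulVec a) ≤ f α := by
  intro f αopt G
  have h_sum_sq : ∑ i, h i ^ 2 = h ⬝ᵥ h := by simp only [dotProduct, sq]
  set D := 1 + ρ * (h ⬝ᵥ h) with hD_def
  have hD : 0 < D := by
    have : 0 ≤ h ⬝ᵥ h := h_sum_sq ▸ Fintype.sum_nonneg fun i => sq_nonneg (h i)
    positivity
  have hG : ρ * (a ⬝ᵥ G *ᵥ a) = ρ * (a ⬝ᵥ a) - (ρ * (h ⬝ᵥ a)) ^ 2 / D := by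
    simp only [G, h_sum_sq, ← hD_def, dotProduct_one_sub_smul_vecMulVec_mulVec]
    field_simp
  have hf : ∀ α, f α = D * (α - αopt) ^ 2 + ρ * (a ⬝ᵥ G *ᵥ a) := by
    intro α
    have hαopt : αopt = ρ * (h ⬝ᵥ a) / D := by simp only [αopt, h_sum_sq, ← hD_def]; rfl
    rw [hG, hαopt, ← quadratic_eq_mul_sq_sub_add hD.ne']
    simp only [f, sum_sq_mul_sub]
    ring
  refine ⟨by simp [hf], fun α => ?_⟩
  rw [hf]
  exact le_add_of_nonneg_left (mul_nonneg hD.le (sq_nonneg _))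
end

section
/- Under the constraints FᵀB = Iₙ, for fixed B with BᵀB = (1+β²)Iₙ, the forward filter minimizing the effective noise variance ε(F) = (σ_s²/n)·tr((F−B)(Iₙ)(F−B)ᵀ + β²FFᵀ) is F = B/(1+β²), i.e., ε(F) ≥ ε(B/(1+β²)) for all F ∈ ℝ^{n×n}, with minimum value σ_s²β². -/
/-!
Since `Bᵀ B = (1 + β²) I`, `ε` is a quadratic in `F` whose square can be completed:
`tr((F − B)(F − B)ᵀ) + β² tr(F Fᵀ) = (1 + β²) tr((F − F₀)(F − F₀)ᵀ) + β² n` with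
`F₀ = B / (1 + β²)`, and the trace of a Gram matrix is nonnegative.
-/

open Matrix

namespace Matrix

variable {m n K : Type*} [Fintype m] [Fintype n]

theorem trace_mul_transpose_self_nonneg {R : Type*} [CommRing R] [PartialOrder R]
    [StarRing R] [TrivialStar R] [StarOrderedRing R] (A : Matrix m n R) :
    0 ≤ (A * Aᵀ).trace := by
  simpa only [conjTranspose_eq_transpose_of_trivial] using
    (posSemidef_self_mul_conjTranspose A).trace_nonneg

theorem trace_sub_mul_transpose_sub [CommRing K] (X Y : Matrix m n K) :
    ((X - Y) * (X - Y)ᵀ).trace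
      = (X * Xᵀ).trace - 2 * (X * Yᵀ).trace + (Y * Yᵀ).trace := by
  have hswap : (Y * Xᵀ).trace = (X * Yᵀ).trace := by
    rw [← trace_transpose, transpose_mul, transpose_transpose]
  simp only [transpose_sub, Matrix.sub_mul, Matrix.mul_sub, trace_sub, hswap]
  ring

theorem trace_sub_mul_transpose_sub_add_eq_complete_square [Field K] {c : K} (hc : c ≠ 0)
    (F B : Matrix m n K) :
    ((F - B) * (F - B)ᵀ).trace + (c - 1) * (F * Fᵀ).trace
      = c * ((F - c⁻¹ • B) * (F - c⁻¹ • B)ᵀ).trace + (1 - c⁻¹) * (B * Bᵀ).trace := by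
  simp only [trace_sub_mul_transpose_sub, transpose_smul, Matrix.smul_mul, Matrix.mul_smul,
    trace_smul, smul_eq_mul]
  field_simp
  ring

theorem trace_mul_transpose_of_transpose_mul_eq_smul_one [DecidableEq n] [CommRing K] {c : K}
    {B : Matrix n n K} (hB : Bᵀ * B = c • 1) :
    (B * Bᵀ).trace = c * Fintype.card n := by
  rw [trace_mul_comm, hB, trace_smul, trace_one, smul_eq_mul]

end Matrix

theorem optimal_forward_filter_general (n : ℕ) (hn : 0 < n) (β σs : ℝ)
    (B : Matrix (Fin n) (Fin n) ℝ)
    (hB : Bᵀ * B = (1 + β ^ 2) • (1 : Matrix (Fin n) (Fin n) ℝ)) :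
    let ε : Matrix (Fin n) (Fin n) ℝ → ℝ := fun F =>
      (σs ^ 2 / n) * (((F - B) * (F - B)ᵀ).trace + β ^ 2 * (F * Fᵀ).trace)
    (∀ F : Matrix (Fin n) (Fin n) ℝ, ε ((1 / (1 + β ^ 2)) • B) ≤ ε F) ∧
    ε ((1 / (1 + β ^ 2)) • B) = σs ^ 2 * β ^ 2 := by
  intro ε
  have hc : (1 + β ^ 2 : ℝ) ≠ 0 := by positivity
  have hn' : (n : ℝ) ≠ 0 := by positivity
  have hε : ∀ F, ε F = σs ^ 2 / n * (1 + β ^ 2) *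
      ((F - (1 / (1 + β ^ 2)) • B) * (F - (1 / (1 + β ^ 2)) • B)ᵀ).trace + σs ^ 2 * β ^ 2 := by
    intro F
    have hsq := trace_sub_mul_transpose_sub_add_eq_complete_square hc F B
    rw [add_sub_cancel_left, trace_mul_transpose_of_transpose_mul_eq_smul_one hB,
      Fintype.card_fin] at hsq
    simp only [ε, one_div, hsq]
    field_simp
    ring
  have hmin : ε ((1 / (1 + β ^ 2)) • B) = σs ^ 2 * β ^ 2 := by
    simp [hε]
  refine ⟨fun F => ?_, hmin⟩
  rw [hmin, hε F, le_add_iff_nonneg_left]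
  exact mul_nonneg (by positivity) (trace_mul_transpose_self_nonneg _)

/-- For fixed `B` with `BᵀB = (1+β²)I`, the forward filter minimizing
`ε(F) = (σ_s²/n)(tr((F−B)(F−B)ᵀ) + β²tr(FFᵀ))` is `F = B/(1+β²)`,
with minimum value `σ_s²β²`. -/
theorem optimal_forward_filter (n : ℕ) (hn : 0 < n) (β σs : ℝ) (hβ : 0 < β) (hσs : 0 < σs)
    (B : Matrix (Fin n) (Fin n) ℝ)
    (hB : Bᵀ * B = (1 + β ^ 2) • (1 : Matrix (Fin n) (Fin n) ℝ)) :
    let ε : Matrix (Fin n) (Fin n) ℝ → ℝ := fun F =>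
      (σs ^ 2 / n) * (((F - B) * (F - B)ᵀ).trace + β ^ 2 * (F * Fᵀ).trace)
    (∀ F : Matrix (Fin n) (Fin n) ℝ, ε ((1 / (1 + β ^ 2)) • B) ≤ ε F) ∧
    ε ((1 / (1 + β ^ 2)) • B) = σs ^ 2 * β ^ 2 :=
  optimal_forward_filter_general n hn β σs B hB
end
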